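/- For every h₀ > 0, every λ > 0 and all h, H ≥ h₀, one has |√λ·(cosh(√λ·h)/sinh(√λ·h)) − √λ·(cosh(√λ·H)/sinh(√λ·H))| ≤ |h − H| / h₀². -/

import Mathlib

/-!
Since `coth' = -1 / sinh²` and `sinh x ≥ x`, the function `coth` is `1 / a²`-Lipschitz on
`[a, ∞)` by the mean value theorem. Applied with `a = s h₀` at the points `s h`, `s H`, where
`s = √λ`, this bounds the difference by `s · s |h - H| / (s h₀)²`, in which the powers of `s`
cancel; hence the bound is uniform in `λ`.
-/

open Real Set

noncomputable def coth (x : ℝ) : ℝ := cosh x / sinh x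

theorem hasDerivAt_coth {x : ℝ} (hx : x ≠ 0) : HasDerivAt coth (-1 / sinh x ^ 2) x := by
  have hsinh : sinh x ≠ 0 := sinh_ne_zero.mpr hx
  refine ((hasDerivAt_cosh x).div (hasDerivAt_sinh x) hsinh).congr_deriv ?_
  rw [← cosh_sq_sub_sinh_sq x]
  ring

theorem abs_deriv_coth_le {a x : ℝ} (ha : 0 < a) (hx : a ≤ x) : |-1 / sinh x ^ 2| ≤ 1 / a ^ 2 := by
  have hax : a ≤ sinh x := hx.trans (self_lt_sinh_iff.mpr (ha.trans_le hx)).le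
  rw [abs_div, abs_neg, abs_one, abs_of_nonneg (sq_nonneg _)]
  gcongr

theorem abs_coth_sub_coth_le {a x y : ℝ} (ha : 0 < a) (hx : a ≤ x) (hy : a ≤ y) :
    |coth x - coth y| ≤ |x - y| / a ^ 2 := by
  have hderiv : ∀ z ∈ Ici a, HasDerivWithinAt coth (-1 / sinh z ^ 2) (Ici a) z := fun z hz =>
    (hasDerivAt_coth (ha.trans_le hz).ne').hasDerivWithinAt
  have := (convex_Ici a).norm_image_sub_le_of_norm_hasDerivWithin_le hderiv
    (fun z hz => abs_deriv_coth_le ha hz) hy hx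
  simpa only [Real.norm_eq_abs, one_div_mul_eq_div] using this

theorem stmt_6 (h₀ : ℝ) (hh₀ : 0 < h₀) (lam : ℝ) (hlam : 0 < lam)
    (h H : ℝ) (hh : h₀ ≤ h) (hH : h₀ ≤ H) :
    |Real.sqrt lam *
        (Real.cosh (Real.sqrt lam * h) / Real.sinh (Real.sqrt lam * h)) -
      Real.sqrt lam *
        (Real.cosh (Real.sqrt lam * H) / Real.sinh (Real.sqrt lam * H))| ≤
      |h - H| / h₀ ^ 2 := by
  set s := Real.sqrt lam
  have hs : 0 < s := Real.sqrt_pos.mpr hlam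
  have hcoth := abs_coth_sub_coth_le (mul_pos hs hh₀) (mul_le_mul_of_nonneg_left hh hs.le)
    (mul_le_mul_of_nonneg_left hH hs.le)
  calc |s * coth (s * h) - s * coth (s * H)| = s * |coth (s * h) - coth (s * H)| := by
        rw [← mul_sub, abs_mul, abs_of_pos hs]
    _ ≤ s * (|s * h - s * H| / (s * h₀) ^ 2) := by gcongr
    _ = |h - H| / h₀ ^ 2 := by
        rw [← mul_sub, abs_mul, abs_of_pos hs]
        field_simp
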